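/- arXiv:2504.17716 — 2 statements merged into one kernel-verified Lean document; each statement's English description precedes it below -/
import Mathlib

section
/- Let (M,d) be a metric space, let U ⊆ M, let x ∈ M, and let D ≥ 0 be such that d(u,x) ≥ D for all u ∈ U. Let T be a partially filled array of length n over M, having at least one non-empty cell, all of whose filled values lie in U, and let T+x be the fully filled array obtained from T by placing x in every empty cell of T. Then c(T+x) − c(T) ≥ G(T)·D. -/
/-- The cost of a fully filled length-`n` array: the sum of distances between
consecutive cells. -/
noncomputable def arrayCost {M : Type*} [MetricSpace M] {n : ℕ} (A : Fin n → M) : ℝ :=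
  ∑ i : Fin (n - 1),
    dist (A ⟨i.val, by have := i.isLt; omega⟩) (A ⟨i.val + 1, by have := i.isLt; omega⟩)

noncomputable def optDist {M : Type*} [MetricSpace M] : Option M → Option M → ℝ
  | some a, some b => dist a b
  | _, _ => 0

/-- The cost of a partially filled array: the sum of distances between consecutive
non-empty cells. -/
noncomputable def partialCost {M : Type*} [MetricSpace M] {n : ℕ} (T : Fin n → Option M) : ℝ :=
  ∑ i : Fin (n - 1),
    optDist (T ⟨i.val, by have := i.isLt; omega⟩) (T ⟨i.val + 1, by have := i.isLt; omega⟩)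

/-- The number of gaps (maximal nonempty runs of consecutive empty cells) of a
partially filled array. -/
noncomputable def gaps {M : Type*} {n : ℕ} (T : Fin n → Option M) : ℕ :=
  Set.ncard {i : Fin n | T i = none ∧
    (i.val = 0 ∨ T ⟨i.val - 1, by have := i.isLt; omega⟩ ≠ none)}

lemma optDist_none_left {M : Type*} [MetricSpace M] (o : Option M) :
    optDist none o = 0 := by cases o <;> rfl

lemma optDist_none_right {M : Type*} [MetricSpace M] (o : Option M) :
    optDist o none = 0 := by cases o <;> rfl

lemma optDist_some_some {M : Type*} [MetricSpace M] (a b : M) :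
    optDist (some a) (some b) = dist a b := rfl

lemma optDist_le_getD {M : Type*} [MetricSpace M] (x : M) (o₁ o₂ : Option M) :
    optDist o₁ o₂ ≤ dist (o₁.getD x) (o₂.getD x) := by
  cases o₁ <;> cases o₂ <;> simp [optDist_none_left, optDist_none_right,
    optDist_some_some, dist_nonneg]

open Classical in
/-- The set of gap-starting indices as a `Finset`. -/
noncomputable def gapFinset {M : Type*} {n : ℕ} (T : Fin n → Option M) : Finset (Fin n) :=
  Finset.univ.filter (fun i => T i = none ∧
    (i.val = 0 ∨ T ⟨i.val - 1, by have := i.isLt; omega⟩ ≠ none))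

lemma mem_gapFinset {M : Type*} {n : ℕ} (T : Fin n → Option M) (i : Fin n) :
    i ∈ gapFinset T ↔ (T i = none ∧
      (i.val = 0 ∨ T ⟨i.val - 1, by have := i.isLt; omega⟩ ≠ none)) := by
  simp [gapFinset]

lemma gaps_eq_card {M : Type*} {n : ℕ} (T : Fin n → Option M) :
    gaps T = (gapFinset T).card := by
  classical
  rw [gaps, ← Set.ncard_coe_finset]
  congr 1
  ext i
  simp [gapFinset]

/-- Let all filled values of a partially filled array `T` (with at
least one non-empty cell) lie in `U`, and let `x` be a point with `d(u,x) ≥ D` for all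
`u ∈ U`. Filling every empty cell of `T` with `x` increases the cost by at least
`G(T)·D`. -/
theorem fill_gaps_cost {M : Type*} [MetricSpace M] {n : ℕ} (U : Set M) (x : M)
    (D : ℝ) (hD : 0 ≤ D)
    (hdist : ∀ u ∈ U, D ≤ dist u x)
    (T : Fin n → Option M)
    (hne : ∃ i, T i ≠ none)
    (hvals : ∀ (i : Fin n) (u : M), T i = some u → u ∈ U) :
    (gaps T : ℝ) * D ≤ arrayCost (fun i => (T i).getD x) - partialCost T := by
  classical
  obtain ⟨i₀, hi₀⟩ := hne
  have hn : 0 < n := i₀.pos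
  set A : Fin n → M := fun i => (T i).getD x with hA
  rcases Nat.lt_or_ge n 2 with hn2 | hn2
  · -- n = 1 : no gaps, no edges
    have hn1 : n = 1 := by omega
    subst hn1
    have hg : gaps T = 0 := by
      rw [gaps, Set.ncard_eq_zero]
      ext i
      simp only [Set.mem_setOf_eq, Set.mem_empty_iff_false, iff_false, not_and]
      intro h1
      have hie : i = i₀ := Fin.ext (by omega)
      exact absurd (hie ▸ h1) hi₀
    have he : IsEmpty (Fin (1 - 1)) := by
      constructor; intro j; exact absurd j.isLt (by omega)
    rw [hg]
    rw [arrayCost, partialCost]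
    rw [Finset.univ_eq_empty, Finset.sum_empty, Finset.sum_empty]
    simp
  · -- main case : n ≥ 2
    set f : Fin (n - 1) → ℝ := fun j =>
      dist (A ⟨j.val, by have := j.isLt; omega⟩) (A ⟨j.val + 1, by have := j.isLt; omega⟩)
        - optDist (T ⟨j.val, by have := j.isLt; omega⟩)
            (T ⟨j.val + 1, by have := j.isLt; omega⟩) with hf
    have hsum : arrayCost A - partialCost T = ∑ j : Fin (n - 1), f j := by
      rw [arrayCost, partialCost, ← Finset.sum_sub_distrib]
    have hf0 : ∀ j : Fin (n - 1), 0 ≤ f j := by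
      intro j
      rw [hf]
      exact sub_nonneg.2 (optDist_le_getD x _ _)
    have feval : ∀ (j : Fin (n - 1)) (p q : Fin n), p.val = j.val → q.val = j.val + 1 →
        f j = dist (A p) (A q) - optDist (T p) (T q) := by
      rintro j ⟨pv, pp⟩ ⟨qv, qp⟩ hp hq
      have hp' : pv = j.val := hp
      have hq' : qv = j.val + 1 := hq
      subst hp'; subst hq'
      rw [hf]
    -- the first filled index
    set s : Finset (Fin n) := Finset.univ.filter (fun j => T j ≠ none) with hs
    have hsne : s.Nonempty := ⟨i₀, by simp [hs, hi₀]⟩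
    set jm : Fin n := s.min' hsne with hjm
    have hjm_mem : T jm ≠ none := by
      have h := s.min'_mem hsne
      exact (Finset.mem_filter.mp h).2
    have hjm_min : ∀ k : Fin n, T k ≠ none → jm ≤ k := by
      intro k hk
      exact s.min'_le k (by simp [hs, hk])
    have hjm_aux : T ⟨0, hn⟩ = none →
        0 < jm.val ∧ T ⟨jm.val - 1, by have := jm.isLt; omega⟩ = none := by
      intro h0
      have hjm0 : 0 < jm.val := by
        by_contra h
        have : jm = ⟨0, hn⟩ := Fin.ext (by simp only [Fin.val_mk]; omega)
        exact hjm_mem (this ▸ h0)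
      refine ⟨hjm0, ?_⟩
      by_contra h
      have := hjm_min _ h
      rw [Fin.le_def] at this
      simp at this
      omega
    -- the injection from gaps to edges
    set φ : Fin n → Fin (n - 1) := fun i =>
      if 0 < i.val then ⟨i.val - 1, by have := i.isLt; omega⟩
      else ⟨jm.val - 1, by have := jm.isLt; omega⟩ with hφ
    have hφpos : ∀ i : Fin n, 0 < i.val → (φ i).val = i.val - 1 := by
      intro i h; simp [hφ, h]
    have hφzero : ∀ i : Fin n, i.val = 0 → (φ i).val = jm.val - 1 := by
      intro i h; simp [hφ, h]
    -- each gap contributes at least D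
    have key : ∀ i ∈ gapFinset T, D ≤ f (φ i) := by
      intro i hi
      rw [mem_gapFinset] at hi
      obtain ⟨hnone, hd⟩ := hi
      by_cases h0 : 0 < i.val
      · have hd' : T ⟨i.val - 1, by have := i.isLt; omega⟩ ≠ none :=
          hd.resolve_left (by omega)
        obtain ⟨u, hu⟩ := Option.ne_none_iff_exists'.mp hd'
        rw [feval (φ i) ⟨i.val - 1, by have := i.isLt; omega⟩ i
          (by rw [hφpos i h0]) (by rw [hφpos i h0]; omega)]
        rw [hu, hnone]
        simpa [hA, hu, hnone, optDist_none_right] using hdist u (hvals _ u hu)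
      · have h0' : i.val = 0 := by omega
        have hi0 : T ⟨0, hn⟩ = none := by
          have : i = ⟨0, hn⟩ := Fin.ext h0'
          exact this ▸ hnone
        obtain ⟨hjm0, hprev⟩ := hjm_aux hi0
        obtain ⟨u, hu⟩ := Option.ne_none_iff_exists'.mp hjm_mem
        rw [feval (φ i) ⟨jm.val - 1, by have := jm.isLt; omega⟩ jm
          (by rw [hφzero i h0']) (by rw [hφzero i h0']; omega)]
        rw [hprev, hu]
        simpa [hA, hprev, hu, optDist_none_left, dist_comm] using hdist u (hvals jm u hu)
    -- injectivity
    have inj : Set.InjOn φ ↑(gapFinset T) := by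
      intro i1 h1 i2 h2 he
      rw [Finset.mem_coe, mem_gapFinset] at h1 h2
      have hev : (φ i1).val = (φ i2).val := congrArg Fin.val he
      by_cases ha : 0 < i1.val <;> by_cases hb : 0 < i2.val
      · rw [hφpos i1 ha, hφpos i2 hb] at hev
        exact Fin.ext (by omega)
      · -- i1 > 0, i2 = 0 : contradiction
        exfalso
        have hb' : i2.val = 0 := by omega
        have hi0 : T ⟨0, hn⟩ = none := by
          have : i2 = ⟨0, hn⟩ := Fin.ext hb'
          exact this ▸ h2.1
        obtain ⟨hjm0, hprev⟩ := hjm_aux hi0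
        have hd' : T ⟨i1.val - 1, by have := i1.isLt; omega⟩ ≠ none :=
          h1.2.resolve_left (by omega)
        rw [hφpos i1 ha, hφzero i2 hb'] at hev
        have : (⟨i1.val - 1, by have := i1.isLt; omega⟩ : Fin n)
            = ⟨jm.val - 1, by have := jm.isLt; omega⟩ := Fin.mk_eq_mk.mpr (by omega)
        exact hd' (this ▸ hprev)
      · exfalso
        have ha' : i1.val = 0 := by omega
        have hi0 : T ⟨0, hn⟩ = none := by
          have : i1 = ⟨0, hn⟩ := Fin.ext ha'
          exact this ▸ h1.1
        obtain ⟨hjm0, hprev⟩ := hjm_aux hi0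
        have hd' : T ⟨i2.val - 1, by have := i2.isLt; omega⟩ ≠ none :=
          h2.2.resolve_left (by omega)
        rw [hφzero i1 ha', hφpos i2 hb] at hev
        have : (⟨i2.val - 1, by have := i2.isLt; omega⟩ : Fin n)
            = ⟨jm.val - 1, by have := jm.isLt; omega⟩ := Fin.mk_eq_mk.mpr (by omega)
        exact hd' (this ▸ hprev)
      · exact Fin.ext (by omega)
    have hcard : ((gapFinset T).image φ).card = (gapFinset T).card :=
      Finset.card_image_of_injOn inj
    have himg : ∀ j ∈ (gapFinset T).image φ, D ≤ f j := by
      intro j hj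
      obtain ⟨i, hi, rfl⟩ := Finset.mem_image.mp hj
      exact key i hi
    have h2 : (((gapFinset T).image φ).card : ℝ) * D ≤ ∑ j ∈ (gapFinset T).image φ, f j := by
      have := Finset.card_nsmul_le_sum ((gapFinset T).image φ) f D himg
      simpa [nsmul_eq_mul] using this
    have h3 : ∑ j ∈ (gapFinset T).image φ, f j ≤ ∑ j : Fin (n - 1), f j :=
      Finset.sum_le_sum_of_subset_of_nonneg (Finset.subset_univ _)
        (fun j _ _ => hf0 j)
    calc (gaps T : ℝ) * D = (((gapFinset T).image φ).card : ℝ) * D := by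
          rw [gaps_eq_card, hcard]
      _ ≤ ∑ j ∈ (gapFinset T).image φ, f j := h2
      _ ≤ ∑ j : Fin (n - 1), f j := h3
      _ = arrayCost A - partialCost T := hsum.symm
end

section
/- Let (M,d) be a metric space and X ⊆ M a finite nonempty set. Then the minimum over all enumerations x_1,…,x_n of the elements of X (each element exactly once) of Σ_{i=1}^{n−1} d(x_i, x_{i+1}) equals the infimum over all finite sequences (walks) w_0, w_1, …, w_k of points of M whose set of values contains X of Σ_{j=0}^{k−1} d(w_j, w_{j+1}); in particular this infimum is attained. -/
/-- The length of a walk `w₀, w₁, …, w_k`, given as a list: the sum of distances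
between consecutive entries. -/
noncomputable def seqCost {M : Type*} [MetricSpace M] : List M → ℝ
  | [] => 0
  | [_] => 0
  | a :: b :: t => dist a b + seqCost (b :: t)

/-- `OPT` of a finite set of points: the minimum, over all enumerations of the
set (each element exactly once), of the sum of consecutive distances. -/
noncomputable def OPTset {M : Type*} [MetricSpace M] (X : Finset M) : ℝ :=
  sInf { c : ℝ | ∃ l : List M, l.Nodup ∧ (∀ a, a ∈ l ↔ a ∈ X) ∧ c = seqCost l }

lemma seqCost_nonneg {M : Type*} [MetricSpace M] : ∀ l : List M, 0 ≤ seqCost l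
  | [] => le_refl 0
  | [_] => le_refl 0
  | a :: b :: t => by
    simp only [seqCost]
    exact add_nonneg dist_nonneg (seqCost_nonneg (b :: t))

lemma seqCost_le_cons {M : Type*} [MetricSpace M] (a : M) (l : List M) :
    seqCost l ≤ seqCost (a :: l) := by
  cases l with
  | nil => simp [seqCost]
  | cons b t =>
    simp only [seqCost]
    linarith [dist_nonneg (x := a) (y := b)]

lemma seqCost_cons_triangle {M : Type*} [MetricSpace M] (a b : M) (l : List M) :
    seqCost (a :: l) ≤ dist a b + seqCost (b :: l) := by
  cases l with
  | nil => simpa [seqCost] using dist_nonneg (x := a) (y := b)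
  | cons c t =>
    simp only [seqCost]
    have := dist_triangle a b c
    linarith

lemma seqCost_cons_mono {M : Type*} [MetricSpace M] {l₁ l₂ : List M} (h : List.Sublist l₁ l₂) :
    ∀ a, seqCost (a :: l₁) ≤ seqCost (a :: l₂) := by
  induction h with
  | slnil => intro a; exact le_refl _
  | cons b h ih =>
    intro a
    calc seqCost (a :: _) ≤ dist a b + seqCost (b :: _) := seqCost_cons_triangle a b _
      _ ≤ dist a b + seqCost (b :: _) := by linarith [ih b]
      _ = seqCost (a :: b :: _) := rfl
  | cons_cons b h ih =>
    intro a
    show dist a b + seqCost (b :: _) ≤ dist a b + seqCost (b :: _)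
    linarith [ih b]

lemma seqCost_sublist {M : Type*} [MetricSpace M] {l₁ l₂ : List M} (h : List.Sublist l₁ l₂) :
    seqCost l₁ ≤ seqCost l₂ := by
  induction h with
  | slnil => exact le_refl _
  | cons b h ih => exact ih.trans (seqCost_le_cons b _)
  | @cons_cons l₁' l₂' b h ih =>
    exact seqCost_cons_mono h b

/-- For a finite nonempty set `X` in a metric space, the minimum over
enumerations of `X` of the sum of consecutive distances equals the infimum of the
lengths of all walks visiting every point of `X`; moreover this infimum is attained. -/
theorem opt_eq_shortest_walk {M : Type*} [MetricSpace M] (X : Finset M) (hX : X.Nonempty) :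
    OPTset X =
      sInf { c : ℝ | ∃ w : List M, w ≠ [] ∧ (∀ a ∈ X, a ∈ w) ∧ c = seqCost w } ∧
    sInf { c : ℝ | ∃ w : List M, w ≠ [] ∧ (∀ a ∈ X, a ∈ w) ∧ c = seqCost w } ∈
      { c : ℝ | ∃ w : List M, w ≠ [] ∧ (∀ a ∈ X, a ∈ w) ∧ c = seqCost w } := by
  classical
  set E := { c : ℝ | ∃ l : List M, l.Nodup ∧ (∀ a, a ∈ l ↔ a ∈ X) ∧ c = seqCost l } with hE
  set W := { c : ℝ | ∃ w : List M, w ≠ [] ∧ (∀ a ∈ X, a ∈ w) ∧ c = seqCost w } with hW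
  -- E is nonempty
  have hEne : E.Nonempty := by
    exact ⟨seqCost X.toList, X.toList, X.nodup_toList, fun a => Finset.mem_toList, rfl⟩
  -- E is finite
  have hEfin : E.Finite := by
    have hsub : E ⊆ seqCost '' (↑X.toList.permutations.toFinset : Set (List M)) := by
      rintro c ⟨l, hnd, hmem, rfl⟩
      refine ⟨l, ?_, rfl⟩
      simp only [Finset.coe_sort_coe, List.coe_toFinset, Set.mem_setOf_eq,
        List.mem_toFinset, List.mem_permutations]
      rw [List.perm_ext_iff_of_nodup hnd X.nodup_toList]
      intro a
      rw [hmem a, Finset.mem_toList]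
    exact Set.Finite.subset (Set.Finite.image _ (X.toList.permutations.toFinset.finite_toSet)) hsub
  have hEmem : sInf E ∈ E := hEne.csInf_mem hEfin
  -- E ⊆ W
  have hEW : E ⊆ W := by
    rintro c ⟨l, hnd, hmem, rfl⟩
    obtain ⟨x, hx⟩ := hX
    refine ⟨l, ?_, fun a ha => (hmem a).2 ha, rfl⟩
    intro h
    rw [h] at hmem
    exact List.not_mem_nil ((hmem x).2 hx)
  -- sInf E is a lower bound of W
  have hlb : ∀ c ∈ W, sInf E ≤ c := by
    rintro c ⟨w, hwne, hwmem, rfl⟩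
    set l₁ := w.dedup.filter (· ∈ X) with hl₁
    have hsub : List.Sublist l₁ w := List.filter_sublist.trans w.dedup_sublist
    have h₁ : seqCost l₁ ∈ E := by
      refine ⟨l₁, w.nodup_dedup.filter _, fun a => ?_, rfl⟩
      simp only [hl₁, List.mem_filter, List.mem_dedup, decide_eq_true_eq]
      exact ⟨fun h => h.2, fun h => ⟨hwmem a h, h⟩⟩
    exact (csInf_le hEfin.bddBelow h₁).trans (seqCost_sublist hsub)
  have hWne : W.Nonempty := ⟨sInf E, hEW hEmem⟩
  have hWbdd : BddBelow W := ⟨sInf E, hlb⟩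
  have heq : sInf E = sInf W :=
    le_antisymm (le_csInf hWne hlb) (csInf_le hWbdd (hEW hEmem))
  exact ⟨heq, heq ▸ hEW hEmem⟩
end
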